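/- Let a ∈ (0,1) and let x, y be real numbers with x² + y² = 1. Then there exists β ∈ [−a/√(1−a²), a/√(1−a²)] with cos(F₂(β)) = x and sin(F₂(β)) = y if and only if x ≥ cos((π/2)(1+a)); moreover, when such β exists it is unique. -/

import Mathlib

/-!
The map `F₂ a` is odd and continuous, and its derivative is positive on the open interval
`|β| < a / √(1 - a²)`, so it maps `[-M, M]`, `M = a / √(1 - a²)`, increasingly onto `[-c, c]`
with `c = F₂ a M = π (1 + a) / 2 < π`. Since `c < π`, an angle in `[-c, c]` is determined by its
cosine and sine, and a point `(x, y)` of the unit circle has such an angle exactly when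
`x ≥ cos c`.
-/

open Real Set

noncomputable def F₂ (a β : ℝ) : ℝ :=
  β / Real.sqrt (1 + β^2) * (Real.pi - Real.arcsin (Real.sqrt ((1 - a^2) * (1 + β^2)))) +
    Real.arcsin (β * Real.sqrt (1 - a^2) / a)

theorem Real.cos_le_cos_iff_abs_le {c θ : ℝ} (hc : c ∈ Icc 0 π) (hθ : |θ| ≤ π) :
    cos c ≤ cos θ ↔ |θ| ≤ c := by
  rw [← cos_abs θ]
  exact strictAntiOn_cos.le_iff_ge hc ⟨abs_nonneg θ, hθ⟩

theorem Real.eq_of_cos_eq_of_sin_eq {θ₁ θ₂ : ℝ} (h₁ : θ₁ ∈ Ioc (-π) π) (h₂ : θ₂ ∈ Ioc (-π) π)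
    (hcos : cos θ₁ = cos θ₂) (hsin : sin θ₁ = sin θ₂) : θ₁ = θ₂ := by
  rw [← Complex.arg_cos_add_sin_mul_I h₁, ← Complex.arg_cos_add_sin_mul_I h₂,
    ← Complex.ofReal_cos, ← Complex.ofReal_sin, hcos, hsin, Complex.ofReal_cos, Complex.ofReal_sin]

theorem Real.exists_mem_Icc_cos_eq_sin_eq_iff {c x y : ℝ} (hc : c ∈ Icc 0 π)
    (hxy : x ^ 2 + y ^ 2 = 1) :
    (∃ θ ∈ Icc (-c) c, cos θ = x ∧ sin θ = y) ↔ cos c ≤ x := by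
  constructor
  · rintro ⟨θ, hθ, rfl, -⟩
    have hθc : |θ| ≤ c := abs_le.2 hθ
    exact (cos_le_cos_iff_abs_le hc (hθc.trans hc.2)).2 hθc
  · intro hx
    set z : ℂ := ⟨x, y⟩
    have hz : ‖z‖ = 1 := by
      rw [Complex.norm_def, Complex.normSq_mk, ← sq, ← sq, hxy, sqrt_one]
    have hz0 : z ≠ 0 := norm_ne_zero_iff.1 (by rw [hz]; exact one_ne_zero)
    have hcos : cos z.arg = x := by rw [Complex.cos_arg hz0, hz, div_one]
    have hsin : sin z.arg = y := by rw [Complex.sin_arg, hz, div_one]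
    refine ⟨z.arg, abs_le.1 ?_, hcos, hsin⟩
    exact (cos_le_cos_iff_abs_le hc (Complex.abs_arg_le_pi z)).1 (hcos ▸ hx)

theorem HasDerivAt.arcsin {f : ℝ → ℝ} {f' x : ℝ} (hf : HasDerivAt f f' x) (hx : f x ^ 2 < 1) :
    HasDerivAt (fun t => arcsin (f t)) (f' / √(1 - f x ^ 2)) x := by
  have hx' := abs_lt.1 (sq_lt_one_iff_abs_lt_one _ |>.1 hx)
  simpa only [Function.comp_def, one_div, mul_one, div_eq_inv_mul] using
    (hasDerivAt_arcsin (by linarith) (by linarith)).comp x hf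

theorem hasDerivAt_div_sqrt_one_add_sq (x : ℝ) :
    HasDerivAt (fun t => t / √(1 + t ^ 2)) (1 / √(1 + x ^ 2) ^ 3) x := by
  have hq : 0 < √(1 + x ^ 2) := by positivity
  have hq2 : √(1 + x ^ 2) ^ 2 = 1 + x ^ 2 := sq_sqrt (by positivity)
  have hsq : HasDerivAt (fun t => 1 + t ^ 2) (2 * x) x := by
    simpa using (hasDerivAt_pow 2 x).const_add 1
  refine ((hasDerivAt_id' x).div (hsq.sqrt (by positivity)) hq.ne').congr_deriv ?_
  field_simp
  linear_combination hq2

theorem abs_lt_div_sqrt_one_sub_sq_iff {a β : ℝ} (ha₀ : 0 ≤ a) (ha₁ : a < 1) :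
    |β| < a / √(1 - a ^ 2) ↔ (1 - a ^ 2) * β ^ 2 < a ^ 2 := by
  have h : 0 < 1 - a ^ 2 := by nlinarith
  rw [← sq_lt_sq₀ (abs_nonneg β) (by positivity), sq_abs, div_pow, sq_sqrt h.le,
    lt_div_iff₀ h, mul_comm]

theorem continuous_F₂ (a : ℝ) : Continuous (F₂ a) := by
  unfold F₂
  have : ∀ β : ℝ, √(1 + β ^ 2) ≠ 0 := fun β => by positivity
  fun_prop (disch := assumption)

theorem F₂_neg (a β : ℝ) : F₂ a (-β) = -F₂ a β := by
  simp only [F₂, neg_sq, neg_div, neg_mul, arcsin_neg]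
  ring

theorem F₂_div_sqrt_one_sub_sq {a : ℝ} (ha₀ : 0 < a) (ha₁ : a < 1) :
    F₂ a (a / √(1 - a ^ 2)) = π / 2 * (1 + a) := by
  have hs : 0 < √(1 - a ^ 2) := sqrt_pos.2 (by nlinarith)
  have hs2 : √(1 - a ^ 2) ^ 2 = 1 - a ^ 2 := sq_sqrt (by nlinarith)
  have hq : 1 + (a / √(1 - a ^ 2)) ^ 2 = (1 / √(1 - a ^ 2)) ^ 2 := by
    field_simp
    linear_combination hs2
  have h1 : (1 - a ^ 2) * (1 + (a / √(1 - a ^ 2)) ^ 2) = 1 := by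
    rw [hq, div_pow, one_pow, hs2, mul_one_div, div_self (by nlinarith)]
  rw [F₂, h1, sqrt_one, arcsin_one, hq, sqrt_sq (by positivity), div_mul_cancel₀ _ hs.ne',
    div_self ha₀.ne', arcsin_one, div_div_eq_mul_div, div_mul_cancel₀ _ hs.ne', div_one]
  ring

-- The `β²`-parts of the two arcsine terms cancel down to a positive multiple of `1 / (1 + β²)`.
theorem hasDerivAt_F₂ {a β : ℝ} (ha₀ : 0 < a) (ha₁ : a < 1) (hβ : (1 - a ^ 2) * β ^ 2 < a ^ 2) :
    HasDerivAt (F₂ a)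
      ((π - arcsin √((1 - a ^ 2) * (1 + β ^ 2))) / √(1 + β ^ 2) ^ 3
        + √(1 - a ^ 2) / ((1 + β ^ 2) * √(a ^ 2 - (1 - a ^ 2) * β ^ 2))) β := by
  have hs2 : √(1 - a ^ 2) ^ 2 = 1 - a ^ 2 := sq_sqrt (by nlinarith)
  have hq2 : √(1 + β ^ 2) ^ 2 = 1 + β ^ 2 := sq_sqrt (by positivity)
  have hd : 0 < √(a ^ 2 - (1 - a ^ 2) * β ^ 2) := sqrt_pos.2 (by linarith)
  have hX : 0 < (1 - a ^ 2) * (1 + β ^ 2) := mul_pos (by nlinarith) (by positivity)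
  have hsq : HasDerivAt (fun t => 1 + t ^ 2) (2 * β) β := by
    simpa using (hasDerivAt_pow 2 β).const_add 1
  have hsX : √((1 - a ^ 2) * (1 + β ^ 2)) = √(1 - a ^ 2) * √(1 + β ^ 2) :=
    sqrt_mul (by nlinarith) _
  have h1X : √(1 - √((1 - a ^ 2) * (1 + β ^ 2)) ^ 2) = √(a ^ 2 - (1 - a ^ 2) * β ^ 2) := by
    rw [sq_sqrt hX.le]; ring_nf
  have h1k : √(1 - (β * √(1 - a ^ 2) / a) ^ 2) = √(a ^ 2 - (1 - a ^ 2) * β ^ 2) / a := by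
    have : 1 - (β * √(1 - a ^ 2) / a) ^ 2 = (a ^ 2 - (1 - a ^ 2) * β ^ 2) / a ^ 2 := by
      field_simp
      linear_combination -β ^ 2 * hs2
    rw [this, sqrt_div' _ (sq_nonneg a), sqrt_sq ha₀.le]
  have darc₁ := ((hsq.const_mul (1 - a ^ 2)).sqrt hX.ne').arcsin (by rw [sq_sqrt hX.le]; nlinarith)
  have darc₂ := (((hasDerivAt_id' β).mul_const √(1 - a ^ 2)).div_const a).arcsin
    (by rw [div_pow, mul_pow, hs2, div_lt_one (by positivity)]; linarith)
  refine (((hasDerivAt_div_sqrt_one_add_sq β).mul (darc₁.const_sub π)).add darc₂).congr_deriv ?_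
  rw [h1X, h1k, hsX]
  set s := √(1 - a ^ 2)
  set q := √(1 + β ^ 2)
  set d := √(a ^ 2 - (1 - a ^ 2) * β ^ 2)
  have hs : 0 < s := sqrt_pos.2 (by nlinarith)
  have hq : 0 < q := by positivity
  field_simp
  linear_combination q ^ 3 * β ^ 2 * hs2 + q * β ^ 2 * (1 - a ^ 2) * hq2

theorem strictMonoOn_F₂ {a : ℝ} (ha₀ : 0 < a) (ha₁ : a < 1) :
    StrictMonoOn (F₂ a) (Icc (-(a / √(1 - a ^ 2))) (a / √(1 - a ^ 2))) := by
  refine strictMonoOn_of_deriv_pos (convex_Icc _ _) (continuous_F₂ a).continuousOn fun β hβ => ?_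
  rw [interior_Icc] at hβ
  have hβ' := (abs_lt_div_sqrt_one_sub_sq_iff ha₀.le ha₁).1 (abs_lt.2 hβ)
  rw [(hasDerivAt_F₂ ha₀ ha₁ hβ').deriv]
  have hs : 0 < √(1 - a ^ 2) := sqrt_pos.2 (by nlinarith)
  have hd : 0 < √(a ^ 2 - (1 - a ^ 2) * β ^ 2) := sqrt_pos.2 (by linarith)
  have harcsin := arcsin_le_pi_div_two √((1 - a ^ 2) * (1 + β ^ 2))
  exact add_pos (div_pos (by linarith [pi_pos]) (by positivity)) (div_pos hs (by positivity))

/-- Solvability criterion for the system `cos (F₂ β) = x`, `sin (F₂ β) = y`: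
a solution `β ∈ [−a/√(1−a²), a/√(1−a²)]` exists iff `x ≥ cos((π/2)(1+a))`,
and the solution is unique when it exists. -/
theorem F₂_system_solvable (a x y : ℝ) (ha : a ∈ Set.Ioo (0:ℝ) 1) (hxy : x^2 + y^2 = 1) :
    ((∃ β ∈ Set.Icc (-(a / Real.sqrt (1 - a^2))) (a / Real.sqrt (1 - a^2)),
        Real.cos (F₂ a β) = x ∧ Real.sin (F₂ a β) = y) ↔
      x ≥ Real.cos (Real.pi / 2 * (1 + a))) ∧
    (∀ β₁ ∈ Set.Icc (-(a / Real.sqrt (1 - a^2))) (a / Real.sqrt (1 - a^2)),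
      ∀ β₂ ∈ Set.Icc (-(a / Real.sqrt (1 - a^2))) (a / Real.sqrt (1 - a^2)),
        Real.cos (F₂ a β₁) = x → Real.sin (F₂ a β₁) = y →
        Real.cos (F₂ a β₂) = x → Real.sin (F₂ a β₂) = y → β₁ = β₂) := by
  obtain ⟨ha₀, ha₁⟩ := ha
  set M := a / √(1 - a ^ 2)
  set c := π / 2 * (1 + a)
  have hc₀ : 0 ≤ c := by positivity
  have hcπ : c < π := by simp only [c]; nlinarith [pi_pos]
  have hM : -M ≤ M := by linarith [show 0 ≤ M by positivity]
  have hmono := strictMonoOn_F₂ ha₀ ha₁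
  have himage : F₂ a '' Icc (-M) M = Icc (-c) c := by
    rw [(continuous_F₂ a).continuousOn.image_Icc_of_monotoneOn hM hmono.monotoneOn, F₂_neg,
      F₂_div_sqrt_one_sub_sq ha₀ ha₁]
  have hangle : ∀ β ∈ Icc (-M) M, F₂ a β ∈ Ioc (-π) π := fun β hβ =>
    Icc_subset_Ioc (by linarith) hcπ.le (himage ▸ mem_image_of_mem _ hβ)
  refine ⟨?_, fun β₁ hβ₁ β₂ hβ₂ hcos₁ hsin₁ hcos₂ hsin₂ => hmono.injOn hβ₁ hβ₂ ?_⟩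
  · rw [ge_iff_le, ← exists_mem_Icc_cos_eq_sin_eq_iff ⟨hc₀, hcπ.le⟩ hxy, ← himage,
      exists_mem_image]
  · exact eq_of_cos_eq_of_sin_eq (hangle β₁ hβ₁) (hangle β₂ hβ₂) (hcos₁.trans hcos₂.symm)
      (hsin₁.trans hsin₂.symm)
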